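/- On ℝ^6 with coordinates x^1,...,x^6, the 3-form ω_1 = (1/2)ω + (1/2)√(x²)(dx^{246} - dx^{235} - dx^{145}) + (1/(2√(x²))) dx^{136} on U = {x² > 0}, where ω = dx^{135} - dx^{146} - dx^{236} + x²·dx^{245}, satisfies dω_1 = (1/(4√(x²))) dx^{1245} + (1/(4(√(x²))³)) dx^{1236}; in particular dω_1 vanishes at no point of U. -/

import Mathlib

/-!
The form `ω₁` depends on the point only through `t = x²`, so `dω₁ = dx² ∧ ∂ₜω₁`, where
`∂ₜω₁ = ½ dx²⁴⁵ + (1/(4√t))(dx²⁴⁶ - dx²³⁵ - dx¹⁴⁵) - (1/(4t√t)) dx¹³⁶`.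
Wedging a constant 3-form with `dx²` is the Laplace expansion of a 4×4 determinant along its
first column; it kills every term containing `dx²`, and the two surviving terms give the formula
after moving `dx²` past `dx¹`. On `(e₁, e₂, e₄, e₅)` the result is `1/(4√t) ≠ 0`.
-/

namespace Stmt12

/-- Exterior derivative of a `k`-form on a vector space. -/
noncomputable def extD {E : Type*} [NormedAddCommGroup E] [NormedSpace ℝ E]
    {k : ℕ} (ω : E → (Fin k → E) → ℝ) : E → (Fin (k + 1) → E) → ℝ :=
  fun x v => ∑ i : Fin (k + 1), (-1 : ℝ) ^ (i : ℕ) *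
    fderiv ℝ (fun y => ω y (v ∘ i.succAbove)) x (v i)

/-- The constant 3-form `dxⁱ ∧ dxʲ ∧ dxᵏ` on `ℝ⁶` (0-indexed). -/
noncomputable def dx3 (i j k : Fin 6) (v : Fin 3 → Fin 6 → ℝ) : ℝ :=
  Matrix.det (Matrix.of fun a b : Fin 3 => v a (![i, j, k] b))

/-- The constant 4-form `dxⁱ ∧ dxʲ ∧ dxᵏ ∧ dxˡ` on `ℝ⁶` (0-indexed). -/
noncomputable def dx4 (i j k l : Fin 6) (v : Fin 4 → Fin 6 → ℝ) : ℝ :=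
  Matrix.det (Matrix.of fun a b : Fin 4 => v a (![i, j, k, l] b))

/-- `ω = dx¹³⁵ - dx¹⁴⁶ - dx²³⁶ + x²·dx²⁴⁵` (coordinates 0-indexed: `x²` is the
coordinate with index 1). -/
noncomputable def omega : (Fin 6 → ℝ) → (Fin 3 → Fin 6 → ℝ) → ℝ :=
  fun x v => dx3 0 2 4 v - dx3 0 3 5 v - dx3 1 2 5 v + x 1 * dx3 1 3 4 v

/-- `ω₁ = ½ω + ½√(x²)(dx²⁴⁶ - dx²³⁵ - dx¹⁴⁵) + (1/(2√(x²)))·dx¹³⁶`. -/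
noncomputable def omega1 : (Fin 6 → ℝ) → (Fin 3 → Fin 6 → ℝ) → ℝ :=
  fun x v => (1 / 2) * omega x v
    + (1 / 2) * Real.sqrt (x 1) * (dx3 1 3 5 v - dx3 1 2 4 v - dx3 0 3 4 v)
    + (1 / (2 * Real.sqrt (x 1))) * dx3 0 2 5 v

/-- `wedgeDx j α` is the form `dxʲ ∧ α`. -/
def wedgeDx {ι : Type*} (j : ι) {k : ℕ} :
    ((Fin k → ι → ℝ) → ℝ) →ₗ[ℝ] (Fin (k + 1) → ι → ℝ) → ℝ where
  toFun α v := ∑ i : Fin (k + 1), (-1 : ℝ) ^ (i : ℕ) * v i j * α (v ∘ i.succAbove)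
  map_add' α β := by
    funext v
    simp only [Pi.add_apply, mul_add, Finset.sum_add_distrib]
  map_smul' c α := by
    funext v
    simp only [Pi.smul_apply, smul_eq_mul, RingHom.id_apply, Finset.mul_sum]
    exact Finset.sum_congr rfl fun _ _ => by ring

theorem extD_comp_eval {ι : Type*} [Fintype ι] {k : ℕ} (g : ℝ → (Fin k → ι → ℝ) → ℝ)
    (g' : (Fin k → ι → ℝ) → ℝ) (j : ι) (x : ι → ℝ)
    (hg : ∀ w, HasDerivAt (fun t => g t w) (g' w) (x j)) :
    extD (fun y => g (y j)) x = wedgeDx j g' := by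
  funext v
  refine Finset.sum_congr rfl fun i _ => ?_
  have hcomp : HasFDerivAt (fun y => g (y j) (v ∘ i.succAbove))
      (g' (v ∘ i.succAbove) • ContinuousLinearMap.proj (R := ℝ) (φ := fun _ => ℝ) j) x :=
    (hg _).comp_hasFDerivAt (h₂ := fun t => g t (v ∘ i.succAbove)) x (hasFDerivAt_apply j x)
  rw [hcomp.fderiv]
  simp only [smul_apply, ContinuousLinearMap.proj_apply, smul_eq_mul]
  ring

theorem wedgeDx_dx3 (i a b c : Fin 6) : wedgeDx i (dx3 a b c) = dx4 i a b c := by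
  funext v
  rw [dx4, Matrix.det_succ_column_zero]
  rfl

theorem dx4_self (i k l : Fin 6) : dx4 i i k l = 0 := by
  funext v
  exact Matrix.det_zero_of_column_eq (i := 0) (j := 1) (by decide) fun _ => rfl

theorem dx4_swap (i j k l : Fin 6) : dx4 j i k l = -dx4 i j k l := by
  funext v
  have hswap : (Matrix.of fun a b : Fin 4 => v a (![j, i, k, l] b)) =
      (Matrix.of fun a b : Fin 4 => v a (![i, j, k, l] b)).submatrix id (Equiv.swap 0 1) := by
    ext a b
    fin_cases b <;> rfl
  rw [dx4, hswap, Matrix.det_permute', Equiv.Perm.sign_swap (by decide)]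
  simp [dx4]

theorem omega1_eq_comp_eval : omega1 = fun y => omega1 (fun _ => y 1) := rfl

theorem hasDerivAt_omega1_const {t : ℝ} (ht : 0 < t) (w : Fin 3 → Fin 6 → ℝ) :
    HasDerivAt (fun s => omega1 (fun _ => s) w)
      (((1 / 2 : ℝ) • dx3 1 3 4 + (1 / (4 * √t)) • (dx3 1 3 5 - dx3 1 2 4 - dx3 0 3 4)
        - (1 / (4 * t * √t)) • dx3 0 2 5) w) t := by
  have hsqrt := Real.hasDerivAt_sqrt ht.ne'
  have hsqrt_pos : 0 < √t := Real.sqrt_pos.2 ht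
  have H := ((((hasDerivAt_id t).mul_const (dx3 1 3 4 w)).const_add
      (dx3 0 2 4 w - dx3 0 3 5 w - dx3 1 2 5 w)).const_mul (1 / 2)).add
    ((hsqrt.const_mul (1 / 2)).mul_const (dx3 1 3 5 w - dx3 1 2 4 w - dx3 0 3 4 w)) |>.add
    (((hsqrt.const_mul 2).inv (by positivity)).mul_const (dx3 0 2 5 w))
  refine (H.congr_deriv ?_).congr_of_eventuallyEq (Filter.Eventually.of_forall fun s => ?_)
  · simp only [Pi.add_apply, Pi.sub_apply, Pi.smul_apply, smul_eq_mul]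
    rw [← Real.sq_sqrt ht.le, Real.sqrt_sq hsqrt_pos.le]
    field_simp
    ring
  · simp only [omega1, omega, Pi.add_apply, Pi.inv_apply, id, one_div, mul_inv]

theorem extD_omega1 (x : Fin 6 → ℝ) (hx : 0 < x 1) :
    extD omega1 x = (1 / (4 * √(x 1))) • dx4 0 1 3 4 + (1 / (4 * √(x 1) ^ 3)) • dx4 0 1 2 5 := by
  rw [omega1_eq_comp_eval, extD_comp_eval _ _ 1 x fun w => hasDerivAt_omega1_const hx w]
  simp only [map_add, map_sub, map_smul, wedgeDx_dx3, dx4_self, dx4_swap 0 1]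
  rw [← Real.sq_sqrt hx.le, Real.sqrt_sq (Real.sqrt_nonneg _)]
  module

theorem dx4_basis_self : dx4 0 1 3 4 (fun a => Pi.single (![0, 1, 3, 4] a) 1) = 1 := by
  rw [dx4]
  convert Matrix.det_one (R := ℝ) (n := Fin 4) using 2
  ext a b
  fin_cases a <;> fin_cases b <;> rfl

theorem dx4_basis_eq_zero : dx4 0 1 2 5 (fun a => Pi.single (![0, 1, 3, 4] a) 1) = 0 :=
  Matrix.det_eq_zero_of_column_eq_zero 2 fun a => by fin_cases a <;> rfl

/-- on `U = {x² > 0} ⊆ ℝ⁶` one has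
`dω₁ = (1/(4√(x²)))·dx¹²⁴⁵ + (1/(4√(x²)³))·dx¹²³⁶`;
in particular `dω₁` vanishes at no point of `U`. -/
theorem stmt12 :
    (∀ x : Fin 6 → ℝ, 0 < x 1 → ∀ v : Fin 4 → Fin 6 → ℝ,
      extD omega1 x v =
        (1 / (4 * Real.sqrt (x 1))) * dx4 0 1 3 4 v
          + (1 / (4 * (Real.sqrt (x 1)) ^ 3)) * dx4 0 1 2 5 v)
    ∧
    (∀ x : Fin 6 → ℝ, 0 < x 1 → ∃ v : Fin 4 → Fin 6 → ℝ, extD omega1 x v ≠ 0) := by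
  refine ⟨fun x hx v => by rw [extD_omega1 x hx]; rfl,
    fun x hx => ⟨fun a => Pi.single (![0, 1, 3, 4] a) 1, ?_⟩⟩
  have hsqrt_pos : 0 < √(x 1) := Real.sqrt_pos.2 hx
  simp only [extD_omega1 x hx, Pi.add_apply, Pi.smul_apply, dx4_basis_self, dx4_basis_eq_zero,
    smul_eq_mul, mul_one, mul_zero, add_zero]
  positivity

end Stmt12
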